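/- Let $M, \upzeta, \alpha, \epsilon, K, C > 0$ with $\upzeta < 1$, $\alpha \in (0,1/2)$ and $\epsilon < \alpha/K$. Suppose $F : \mathbb{D} \times (0,1] \to \mathbb{R}$ satisfies $|F(z,r) - F(w,s)| \leq M (\log(1/r))^{\upzeta} |(z,r)-(w,s)|^{\alpha} / s^{\alpha + \epsilon}$ whenever $1/2 < r/s < 2$. For $r \in (0,1)$ let $n(r)$ be the unique integer $n \geq 2$ with $r \in [n^{-K}, (n-1)^{-K})$, and suppose $(z,r) \mapsto (z', r')$ is an assignment with $|z - z'| \leq n(r)^{-(K+1)}$, $|r - r'| \leq C n(r)^{-(K+1)}$, and $r' \geq \tfrac{1}{2} n(r)^{-K}$. Then $\sup_{z \in \mathbb{D}} \left| \frac{F(z,r)}{\log(1/r)} - \frac{F(z', r')}{\log(1/r')} \right| \to 0$ as $r \to 0$. -/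

import Mathlib

/-!
Write `F z r / log (1/r) - F z' r' / log (1/r')` as
`(F z r - F z' r') / log (1/r) + F z' r' * (1 / log (1/r) - 1 / log (1/r'))`.
Since `n(r)^(-K) ≤ r`, the displacement `|(z, r) - (z', r')|` is `O(r^(1 + 1/K))`, so the Hölder
bound makes the first term `O(log (1/r)^ζ * r^(α/K - ε))`. In the second term
`1 / log (1/r) - 1 / log (1/r')` is `O(r^(1/K))`, while chaining the Hölder bound along the radii
`s, 3s/2, (3/2)^2 s, …, 1` (at radius `1` the bound vanishes, so `F w 1 = F 0 1`) shows
`|F w s| = O(1 + log (1/s)^(ζ+1) * s^(-ε))`. As `ε < α/K < 1/K`, both terms are powers of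
`log (1/r)` times positive powers of `r`, hence tend to `0`.
-/

open Metric Real Filter Topology Set

lemma tendsto_log_one_div_rpow_mul_rpow (p : ℝ) {q : ℝ} (hq : 0 < q) :
    Tendsto (fun r ↦ log (1 / r) ^ p * r ^ q) (𝓝[>] 0) (𝓝 0) :=
  (isLittleO_abs_log_rpow_rpow_nhdsGT_zero p (neg_lt_zero.2 hq)).tendsto_div_nhds_zero.congr' <|
    eventually_of_mem (Ioo_mem_nhdsGT one_pos) fun r hr ↦ by
      show |log r| ^ p / r ^ (-q) = log (1 / r) ^ p * r ^ q
      rw [one_div, log_inv, rpow_neg hr.1.le, div_inv_eq_mul, abs_of_neg (log_neg hr.1 hr.2)]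

lemma one_le_log_one_div {x : ℝ} (hx : 0 < x) (hx' : x ≤ 1 / 3) : 1 ≤ log (1 / x) := by
  rw [le_log_iff_exp_le (by positivity), le_div_iff₀ hx]
  nlinarith [exp_one_lt_d9]

lemma abs_log_sub_log_le {x y : ℝ} (hx : 0 < x) (hy : 0 < y) :
    |log x - log y| ≤ |x - y| / min x y := by
  have key : ∀ {a b : ℝ}, 0 < a → 0 < b → log a - log b ≤ |a - b| / min a b := by
    intro a b ha hb
    calc log a - log b = log (a / b) := (log_div ha.ne' hb.ne').symm
      _ ≤ a / b - 1 := log_le_sub_one_of_pos (div_pos ha hb)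
      _ = (a - b) / b := by field_simp
      _ ≤ |a - b| / min a b :=
          div_le_div₀ (abs_nonneg _) (le_abs_self _) (lt_min ha hb) (min_le_right _ _)
  rw [abs_sub_le_iff]
  exact ⟨key hx hy, by rw [abs_sub_comm, min_comm]; exact key hy hx⟩

lemma abs_inv_sub_inv_le_abs_sub {a b : ℝ} (ha : 1 ≤ a) (hb : 1 ≤ b) :
    |a⁻¹ - b⁻¹| ≤ |a - b| := by
  rw [inv_sub_inv (by positivity) (by positivity), abs_div, abs_sub_comm,
    abs_of_pos (by positivity : 0 < a * b)]
  exact div_le_self (abs_nonneg _) (one_le_mul_of_one_le_of_one_le ha hb)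

lemma abs_one_div_log_one_div_sub_le {x y : ℝ} (hx : 0 < x) (hy : 0 < y)
    (hLx : 1 ≤ log (1 / x)) (hLy : 1 ≤ log (1 / y)) :
    |1 / log (1 / x) - 1 / log (1 / y)| ≤ |x - y| / min x y :=
  calc |1 / log (1 / x) - 1 / log (1 / y)| ≤ |log (1 / x) - log (1 / y)| := by
        rw [one_div, one_div (log _)]; exact abs_inv_sub_inv_le_abs_sub hLx hLy
    _ = |log x - log y| := by rw [one_div, one_div, log_inv, log_inv, neg_sub_neg, abs_sub_comm]
    _ ≤ |x - y| / min x y := abs_log_sub_log_le hx hy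

lemma rpow_neg_add_one_le {n r K : ℝ} (hn : 0 < n) (hK : 0 < K) (h : n ^ (-K) ≤ r) :
    n ^ (-(K + 1)) ≤ r * r ^ (1 / K) :=
  calc n ^ (-(K + 1)) = (n ^ (-K)) ^ (1 + 1 / K) := by
        rw [← rpow_mul hn.le]; congr 1; field_simp
    _ ≤ r ^ (1 + 1 / K) := by gcongr
    _ = r * r ^ (1 / K) := by
        rw [rpow_add ((rpow_pos_of_pos hn _).trans_le h), rpow_one]

lemma log_one_div_rpow_mul_rpow_neg_le {ζ ε s s' : ℝ} (hζ : 0 ≤ ζ) (hε : 0 ≤ ε) (hs : 0 < s)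
    (hss' : s ≤ s') (hs' : s' ≤ 1) :
    log (1 / s') ^ ζ * s' ^ (-ε) ≤ log (1 / s) ^ ζ * s ^ (-ε) := by
  have hs'pos : 0 < s' := hs.trans_le hss'
  have hL' : 0 ≤ log (1 / s') := log_nonneg (one_le_one_div hs'pos hs')
  have hL : log (1 / s') ≤ log (1 / s) := by gcongr
  exact mul_le_mul (rpow_le_rpow hL' hL hζ) (rpow_le_rpow_of_nonpos hs hss' (neg_nonpos.2 hε))
    (rpow_nonneg hs'pos.le _) (rpow_nonneg (hL'.trans hL) _)

-- `log (1/s) / log (3/2) + 1` bounds the number of steps `s ↦ 3s/2` from `s` up to `1`.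
noncomputable def growthBound (M ζ ε A s : ℝ) : ℝ :=
  A + (log (1 / s) / log (3 / 2) + 1) * (M * log (1 / s) ^ ζ * s ^ (-ε))

lemma growthBound_le_of_le {M ζ ε A s s' : ℝ} (hM : 0 ≤ M) (hζ : 0 ≤ ζ) (hε : 0 ≤ ε) (hs : 0 < s)
    (hss' : s ≤ s') (hs' : s' ≤ 1) :
    growthBound M ζ ε A s' ≤ growthBound M ζ ε A s := by
  have hs'pos : 0 < s' := hs.trans_le hss'
  have hL' : 0 ≤ log (1 / s') := log_nonneg (one_le_one_div hs'pos hs')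
  have hL : log (1 / s') ≤ log (1 / s) := by gcongr
  have hlog : 0 < log (3 / 2 : ℝ) := log_pos (by norm_num)
  unfold growthBound
  rw [mul_assoc M, mul_assoc M]
  gcongr _ + ?_
  exact mul_le_mul (by gcongr) (mul_le_mul_of_nonneg_left
    (log_one_div_rpow_mul_rpow_neg_le hζ hε hs hss' hs') hM) (by positivity)
    (add_nonneg (div_nonneg (hL'.trans hL) hlog.le) zero_le_one)

lemma tendsto_rpow_mul_growthBound_half (M A : ℝ) {ζ ε q : ℝ} (hζ : 0 ≤ ζ) (hε : 0 ≤ ε)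
    (hεq : ε < q) :
    Tendsto (fun r ↦ r ^ q * growthBound M ζ ε A (r / 2)) (𝓝[>] 0) (𝓝 0) := by
  have h := ((tendsto_log_one_div_rpow_mul_rpow 0 (hε.trans_lt hεq)).const_mul A).add
    (((tendsto_log_one_div_rpow_mul_rpow (ζ + 1) (sub_pos.2 hεq)).const_mul (M / log (3 / 2))).add
      ((tendsto_log_one_div_rpow_mul_rpow ζ (sub_pos.2 hεq)).const_mul M))
  simp only [mul_zero, add_zero] at h
  have hG : Tendsto (fun s ↦ s ^ q * growthBound M ζ ε A s) (𝓝[>] 0) (𝓝 0) := by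
    refine h.congr' (eventually_of_mem (Ioo_mem_nhdsGT one_pos) fun s hs ↦ ?_)
    have hL : 0 ≤ log (1 / s) := log_nonneg (one_le_one_div hs.1 hs.2.le)
    simp only [growthBound]
    rw [rpow_zero, rpow_add_one' hL (by linarith), rpow_sub hs.1, rpow_neg hs.1.le]
    field_simp
  have hhalf : Tendsto (fun r : ℝ ↦ r / 2) (𝓝[>] 0) (𝓝[>] 0) :=
    tendsto_nhdsWithin_of_tendsto_nhds_of_eventually_within _
      (((continuous_id.div_const 2).tendsto' 0 0 (by simp)).mono_left nhdsWithin_le_nhds)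
      (eventually_mem_nhdsWithin.mono fun r (hr : 0 < r) ↦ half_pos hr)
  have := (hG.comp hhalf).const_mul (2 ^ q)
  rw [mul_zero] at this
  refine this.congr' (eventually_mem_nhdsWithin.mono fun r (hr : 0 < r) ↦ ?_)
  simp only [Function.comp_apply]
  rw [div_rpow hr.le zero_le_two]
  field_simp

def ScaledHolderBound (M ζ α ε : ℝ) (F : ℂ → ℝ → ℝ) : Prop :=
  ∀ z ∈ ball (0 : ℂ) 1, ∀ w ∈ ball (0 : ℂ) 1, ∀ r ∈ Ioc (0 : ℝ) 1, ∀ s ∈ Ioc (0 : ℝ) 1,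
    1 / 2 < r / s → r / s < 2 →
    |F z r - F w s| ≤ M * log (1 / r) ^ ζ * √(‖z - w‖ ^ 2 + (r - s) ^ 2) ^ α / s ^ (α + ε)

namespace ScaledHolderBound

variable {M ζ α ε : ℝ} {F : ℂ → ℝ → ℝ} (hF : ScaledHolderBound M ζ α ε F)
include hF

theorem eq_at_radius_one (hζ : 0 < ζ) {w : ℂ} (hw : w ∈ ball (0 : ℂ) 1) : F w 1 = F 0 1 := by
  have h := hF w hw 0 (mem_ball_self one_pos) 1 ⟨one_pos, le_rfl⟩ 1 ⟨one_pos, le_rfl⟩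
    (by norm_num) (by norm_num)
  rw [div_one, log_one, zero_rpow hζ.ne', mul_zero, zero_mul, zero_div] at h
  exact sub_eq_zero.1 (abs_nonpos_iff.1 h)

theorem abs_sub_le_of_lt_two_mul (hM : 0 ≤ M) (hζ : 0 ≤ ζ) (hα : 0 ≤ α) {w : ℂ}
    (hw : w ∈ ball (0 : ℂ) 1) {s s' : ℝ} (hs : 0 < s) (hss' : s ≤ s') (hs' : s' ≤ 1)
    (hs's : s' < 2 * s) :
    |F w s' - F w s| ≤ M * log (1 / s) ^ ζ * s ^ (-ε) := by
  have hs'pos : 0 < s' := hs.trans_le hss'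
  have hratio : 1 / 2 < s' / s := by rw [lt_div_iff₀ hs]; linarith
  calc |F w s' - F w s|
      ≤ M * log (1 / s') ^ ζ * √(‖w - w‖ ^ 2 + (s' - s) ^ 2) ^ α / s ^ (α + ε) :=
        hF w hw w hw s' ⟨hs'pos, hs'⟩ s ⟨hs, hss'.trans hs'⟩ hratio
          ((div_lt_iff₀ hs).2 (by linarith))
    _ = M * log (1 / s') ^ ζ * (s' - s) ^ α / s ^ (α + ε) := by
        rw [sub_self, norm_zero, zero_pow two_ne_zero, zero_add, sqrt_sq (by linarith)]
    _ ≤ M * log (1 / s) ^ ζ * s ^ α / s ^ (α + ε) := by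
        have hL' : 0 ≤ log (1 / s') := log_nonneg (one_le_one_div hs'pos hs')
        have hL : log (1 / s') ≤ log (1 / s) := by gcongr
        have := hL'.trans hL
        gcongr M * ?_ * ?_ / _
        · exact rpow_le_rpow hL' hL hζ
        · exact rpow_le_rpow (by linarith) (by linarith) hα
    _ = M * log (1 / s) ^ ζ * s ^ (-ε) := by
        rw [mul_div_assoc, ← rpow_sub hs, sub_add_cancel_left]

theorem abs_sub_one_le_nat_mul (hM : 0 ≤ M) (hζ : 0 ≤ ζ) (hα : 0 ≤ α) (hε : 0 ≤ ε) {w : ℂ}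
    (hw : w ∈ ball (0 : ℂ) 1) (N : ℕ) {s : ℝ} (hN : (2 / 3 : ℝ) ^ N ≤ s) (hs : s ≤ 1) :
    |F w s - F w 1| ≤ N * (M * log (1 / s) ^ ζ * s ^ (-ε)) := by
  induction N generalizing s with
  | zero =>
    obtain rfl : s = 1 := le_antisymm hs (by simpa using hN)
    simp
  | succ N ih =>
    have hspos : 0 < s := (pow_pos (by norm_num) _).trans_le hN
    set s' := min (3 / 2 * s) 1
    have hss' : s ≤ s' := le_min (by linarith) hs
    have hN' : (2 / 3 : ℝ) ^ N ≤ s' :=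
      le_min (by rw [pow_succ] at hN; linarith) (pow_le_one₀ (by norm_num) (by norm_num))
    have hstep := hF.abs_sub_le_of_lt_two_mul hM hζ hα hw hspos hss' (min_le_right _ _)
      ((min_le_left _ _).trans_lt (by linarith))
    have hmono : M * log (1 / s') ^ ζ * s' ^ (-ε) ≤ M * log (1 / s) ^ ζ * s ^ (-ε) := by
      rw [mul_assoc, mul_assoc]
      exact mul_le_mul_of_nonneg_left
        (log_one_div_rpow_mul_rpow_neg_le hζ hε hspos hss' (min_le_right _ _)) hM
    calc |F w s - F w 1| ≤ |F w s' - F w s| + |F w s' - F w 1| := by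
          rw [abs_sub_comm (F w s')]; exact abs_sub_le _ _ _
      _ ≤ M * log (1 / s) ^ ζ * s ^ (-ε) + N * (M * log (1 / s) ^ ζ * s ^ (-ε)) :=
          add_le_add hstep ((ih hN' (min_le_right _ _)).trans (by gcongr))
      _ = (N + 1 : ℕ) * (M * log (1 / s) ^ ζ * s ^ (-ε)) := by push_cast; ring

theorem abs_le_growthBound (hM : 0 ≤ M) (hζ : 0 < ζ) (hα : 0 ≤ α) (hε : 0 ≤ ε) {w : ℂ}
    (hw : w ∈ ball (0 : ℂ) 1) {s : ℝ} (hs : 0 < s) (hs1 : s ≤ 1) :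
    |F w s| ≤ growthBound M ζ ε |F 0 1| s := by
  have hL : 0 ≤ log (1 / s) := log_nonneg (one_le_one_div hs hs1)
  have hlog : 0 < log (3 / 2 : ℝ) := log_pos (by norm_num)
  set N := ⌈log (1 / s) / log (3 / 2)⌉₊
  have hN : (2 / 3 : ℝ) ^ N ≤ s := by
    rw [← log_le_log_iff (by positivity) hs, log_pow, show (2 / 3 : ℝ) = (3 / 2)⁻¹ by norm_num,
      log_inv, mul_neg, neg_le, ← log_inv, ← one_div, ← div_le_iff₀ hlog]
    exact Nat.le_ceil _
  have hNle : (N : ℝ) ≤ log (1 / s) / log (3 / 2) + 1 := (Nat.ceil_lt_add_one (by positivity)).le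
  calc |F w s| ≤ |F w 1| + |F w s - F w 1| := by
        linarith [abs_sub_abs_le_abs_sub (F w s) (F w 1)]
    _ ≤ |F w 1| + N * (M * log (1 / s) ^ ζ * s ^ (-ε)) := by
        gcongr
        exact hF.abs_sub_one_le_nat_mul hM hζ.le hα hε hw N hN hs1
    _ = |F 0 1| + N * (M * log (1 / s) ^ ζ * s ^ (-ε)) := by rw [hF.eq_at_radius_one hζ hw]
    _ ≤ growthBound M ζ ε |F 0 1| s := by
        unfold growthBound
        gcongr

theorem abs_sub_le_of_near (hM : 0 ≤ M) (hα : 0 ≤ α) (hε : 0 ≤ ε)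
    {z Z : ℂ} (hz : z ∈ ball (0 : ℂ) 1) (hZ : Z ∈ ball (0 : ℂ) 1) {r R C d : ℝ} (hr : 0 < r)
    (hr1 : r ≤ 1) (hR1 : R ≤ 1) (hRlo : r / 2 < R) (hRhi : R < 2 * r) (hzZ : ‖z - Z‖ ≤ d)
    (hrR : |r - R| ≤ C * d) :
    |F z r - F Z R| ≤ M * log (1 / r) ^ ζ * (√(1 + C ^ 2) * d) ^ α / (r / 2) ^ (α + ε) := by
  have hR : 0 < R := by linarith
  have hd : 0 ≤ d := (norm_nonneg _).trans hzZ
  have hdist : √(‖z - Z‖ ^ 2 + (r - R) ^ 2) ≤ √(1 + C ^ 2) * d := by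
    rw [← sqrt_sq hd, ← sqrt_mul (by positivity)]
    gcongr
    nlinarith [sq_abs (r - R), abs_nonneg (r - R), norm_nonneg (z - Z)]
  have hL : 0 ≤ log (1 / r) := log_nonneg (one_le_one_div hr hr1)
  calc |F z r - F Z R|
      ≤ M * log (1 / r) ^ ζ * √(‖z - Z‖ ^ 2 + (r - R) ^ 2) ^ α / R ^ (α + ε) :=
        hF z hz Z hZ r ⟨hr, hr1⟩ R ⟨hR, hR1⟩ (by rw [lt_div_iff₀ hR]; linarith)
          (by rw [div_lt_iff₀ hR]; linarith)
    _ ≤ M * log (1 / r) ^ ζ * (√(1 + C ^ 2) * d) ^ α / (r / 2) ^ (α + ε) := by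
        gcongr

theorem abs_div_log_sub_div_log_le (hM : 0 ≤ M) (hζ : 0 < ζ) (hα : 0 ≤ α) (hε : 0 ≤ ε)
    {z Z : ℂ} (hz : z ∈ ball (0 : ℂ) 1) (hZ : Z ∈ ball (0 : ℂ) 1) {r R C κ : ℝ} (hr : 0 < r)
    (hr8 : r ≤ 1 / 8) (hR1 : R ≤ 1) (hC : 0 ≤ C) (hCr : C * r ^ κ < 1 / 2)
    (hzZ : ‖z - Z‖ ≤ r * r ^ κ) (hrR : |r - R| ≤ C * (r * r ^ κ)) :
    |F z r / log (1 / r) - F Z R / log (1 / R)| ≤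
      M * √(1 + C ^ 2) ^ α * 2 ^ (α + ε) * (log (1 / r) ^ ζ * r ^ (α * κ - ε)) +
        2 * C * (r ^ κ * growthBound M ζ ε |F 0 1| (r / 2)) := by
  have hrR' : |r - R| < r / 2 := hrR.trans_lt (by nlinarith)
  obtain ⟨hRlo, hRhi⟩ : r / 2 < R ∧ R < 3 / 2 * r := by constructor <;> linarith [abs_lt.1 hrR']
  have hR : 0 < R := by linarith
  have hLr : 1 ≤ log (1 / r) := one_le_log_one_div hr (by linarith)
  have hLR : 1 ≤ log (1 / R) := one_le_log_one_div hR (by linarith)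
  have hdiff : |F z r - F Z R| ≤
      M * √(1 + C ^ 2) ^ α * 2 ^ (α + ε) * (log (1 / r) ^ ζ * r ^ (α * κ - ε)) := by
    refine (hF.abs_sub_le_of_near hM hα hε hz hZ hr (by linarith) hR1 hRlo (by linarith) hzZ
      hrR).trans_eq ?_
    rw [mul_rpow (by positivity) (by positivity), mul_rpow hr.le (by positivity),
      div_rpow hr.le zero_le_two, rpow_sub hr, mul_comm α κ, rpow_mul hr.le, rpow_add hr]
    field_simp
  have hinv : |1 / log (1 / r) - 1 / log (1 / R)| ≤ 2 * C * r ^ κ :=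
    calc |1 / log (1 / r) - 1 / log (1 / R)| ≤ |r - R| / min r R :=
          abs_one_div_log_one_div_sub_le hr hR hLr hLR
      _ ≤ C * (r * r ^ κ) / (r / 2) :=
          div_le_div₀ (by positivity) hrR (by positivity) (le_min (by linarith) hRlo.le)
      _ = 2 * C * r ^ κ := by field_simp
  have hgrowth : |F Z R| ≤ growthBound M ζ ε |F 0 1| (r / 2) :=
    (hF.abs_le_growthBound hM hζ hα hε hZ hR hR1).trans
      (growthBound_le_of_le hM hζ.le hε (by positivity) hRlo.le hR1)
  calc |F z r / log (1 / r) - F Z R / log (1 / R)|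
      = |(F z r - F Z R) / log (1 / r) + F Z R * (1 / log (1 / r) - 1 / log (1 / R))| := by
        congr 1; ring
    _ ≤ |F z r - F Z R| + |F Z R| * (2 * C * r ^ κ) := by
        refine (abs_add_le _ _).trans (add_le_add ?_ ?_)
        · rw [abs_div, abs_of_pos (by linarith : 0 < log (1 / r))]
          exact div_le_self (abs_nonneg _) hLr
        · rw [abs_mul]
          exact mul_le_mul_of_nonneg_left hinv (abs_nonneg _)
    _ ≤ _ := by
        refine add_le_add hdiff ?_
        calc |F Z R| * (2 * C * r ^ κ) ≤ growthBound M ζ ε |F 0 1| (r / 2) * (2 * C * r ^ κ) := by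
              gcongr
          _ = 2 * C * (r ^ κ * growthBound M ζ ε |F 0 1| (r / 2)) := by ring

end ScaledHolderBound

theorem stmt13_general (M ζ α ε K C : ℝ)
    (hM : 0 < M) (hζ : 0 < ζ) (hα : α ∈ Set.Ioo (0 : ℝ) (1 / 2))
    (hε : 0 < ε) (hK : 0 < K) (hC : 0 < C) (hεK : ε < α / K)
    (F : ℂ → ℝ → ℝ)
    (hHolder : ∀ z ∈ ball (0 : ℂ) 1, ∀ w ∈ ball (0 : ℂ) 1,
      ∀ r ∈ Set.Ioc (0 : ℝ) 1, ∀ s ∈ Set.Ioc (0 : ℝ) 1, 1 / 2 < r / s → r / s < 2 →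
      |F z r - F w s| ≤ M * Real.log (1 / r) ^ ζ *
        Real.sqrt (‖z - w‖ ^ 2 + (r - s) ^ 2) ^ α / s ^ (α + ε))
    (nr : ℝ → ℕ)
    (hnr : ∀ r ∈ Set.Ioo (0 : ℝ) 1, 2 ≤ nr r ∧
      ((nr r : ℝ)) ^ (-K) ≤ r ∧ r < ((nr r : ℝ) - 1) ^ (-K))
    (Z : ℂ → ℝ → ℂ) (R : ℂ → ℝ → ℝ)
    (hZmem : ∀ z ∈ ball (0 : ℂ) 1, ∀ r ∈ Set.Ioo (0 : ℝ) 1, Z z r ∈ ball (0 : ℂ) 1)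
    (hZclose : ∀ z ∈ ball (0 : ℂ) 1, ∀ r ∈ Set.Ioo (0 : ℝ) 1,
      ‖z - Z z r‖ ≤ ((nr r : ℝ)) ^ (-(K + 1)))
    (hRclose : ∀ z ∈ ball (0 : ℂ) 1, ∀ r ∈ Set.Ioo (0 : ℝ) 1,
      |r - R z r| ≤ C * ((nr r : ℝ)) ^ (-(K + 1)))
    (hRup : ∀ z ∈ ball (0 : ℂ) 1, ∀ r ∈ Set.Ioo (0 : ℝ) 1, R z r ≤ 1) :
    ∀ δ > (0 : ℝ), ∃ r0 > (0 : ℝ), ∀ r ∈ Set.Ioo (0 : ℝ) r0, r < 1 →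
      ∀ z ∈ ball (0 : ℂ) 1,
        |F z r / Real.log (1 / r) - F (Z z r) (R z r) / Real.log (1 / R z r)| ≤ δ := by
  intro δ hδ
  have hF : ScaledHolderBound M ζ α ε F := hHolder
  have hexp : 0 < α * (1 / K) - ε := by rw [mul_one_div]; linarith
  have hεK' : ε < 1 / K := hεK.trans (by gcongr; linarith [hα.2])
  set B : ℝ → ℝ := fun r ↦
    M * √(1 + C ^ 2) ^ α * 2 ^ (α + ε) * (log (1 / r) ^ ζ * r ^ (α * (1 / K) - ε)) +
      2 * C * (r ^ (1 / K) * growthBound M ζ ε |F 0 1| (r / 2))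
  have hB : Tendsto B (𝓝[>] 0) (𝓝 0) := by
    have := ((tendsto_log_one_div_rpow_mul_rpow ζ hexp).const_mul
      (M * √(1 + C ^ 2) ^ α * 2 ^ (α + ε))).add
      ((tendsto_rpow_mul_growthBound_half M |F 0 1| hζ.le hε.le hεK').const_mul (2 * C))
    simpa only [mul_zero, add_zero] using this
  have hCt : Tendsto (fun r : ℝ ↦ C * r ^ (1 / K)) (𝓝[>] 0) (𝓝 0) := by
    simpa using (tendsto_log_one_div_rpow_mul_rpow 0 (one_div_pos.2 hK)).const_mul C
  obtain ⟨r0, hr0, hsmall⟩ := mem_nhdsGT_iff_exists_Ioo_subset.1 <|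
    ((eventually_le_nhds (by norm_num : (0 : ℝ) < 1 / 8)).filter_mono nhdsWithin_le_nhds).and
      ((hCt.eventually_lt_const (by norm_num : (0 : ℝ) < 1 / 2)).and (hB.eventually_le_const hδ))
  refine ⟨r0, hr0, fun r hr hr1 z hz ↦ ?_⟩
  obtain ⟨hr8, hCr, hBr⟩ := hsmall hr
  have hrI : r ∈ Ioo 0 1 := ⟨hr.1, hr1⟩
  obtain ⟨hn2, hnK, -⟩ := hnr r hrI
  have hn := rpow_neg_add_one_le (by positivity) hK hnK
  exact (hF.abs_div_log_sub_div_log_le hM.le hζ hα.1.le hε.le hz (hZmem z hz r hrI) hr.1 hr8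
    (hRup z hz r hrI) hC.le hCr ((hZclose z hz r hrI).trans hn)
    ((hRclose z hz r hrI).trans (by gcongr))).trans hBr

/-- The Hölder-type modulus of continuity of the circle average process implies that
the normalized process at `(z, r)` and at its discretized companion `(z', r')` (nearest
lattice point and discretized radius) have uniformly vanishing difference as `r → 0`. -/
theorem stmt13 (M ζ α ε K C : ℝ)
    (hM : 0 < M) (hζ : 0 < ζ) (hζ1 : ζ < 1) (hα : α ∈ Set.Ioo (0 : ℝ) (1 / 2))
    (hε : 0 < ε) (hK : 0 < K) (hC : 0 < C) (hεK : ε < α / K)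
    (F : ℂ → ℝ → ℝ)
    (hHolder : ∀ z ∈ ball (0 : ℂ) 1, ∀ w ∈ ball (0 : ℂ) 1,
      ∀ r ∈ Set.Ioc (0 : ℝ) 1, ∀ s ∈ Set.Ioc (0 : ℝ) 1, 1 / 2 < r / s → r / s < 2 →
      |F z r - F w s| ≤ M * Real.log (1 / r) ^ ζ *
        Real.sqrt (‖z - w‖ ^ 2 + (r - s) ^ 2) ^ α / s ^ (α + ε))
    (nr : ℝ → ℕ)
    (hnr : ∀ r ∈ Set.Ioo (0 : ℝ) 1, 2 ≤ nr r ∧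
      ((nr r : ℝ)) ^ (-K) ≤ r ∧ r < ((nr r : ℝ) - 1) ^ (-K))
    (Z : ℂ → ℝ → ℂ) (R : ℂ → ℝ → ℝ)
    (hZmem : ∀ z ∈ ball (0 : ℂ) 1, ∀ r ∈ Set.Ioo (0 : ℝ) 1, Z z r ∈ ball (0 : ℂ) 1)
    (hZclose : ∀ z ∈ ball (0 : ℂ) 1, ∀ r ∈ Set.Ioo (0 : ℝ) 1,
      ‖z - Z z r‖ ≤ ((nr r : ℝ)) ^ (-(K + 1)))
    (hRclose : ∀ z ∈ ball (0 : ℂ) 1, ∀ r ∈ Set.Ioo (0 : ℝ) 1,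
      |r - R z r| ≤ C * ((nr r : ℝ)) ^ (-(K + 1)))
    (hRlow : ∀ z ∈ ball (0 : ℂ) 1, ∀ r ∈ Set.Ioo (0 : ℝ) 1,
      (1 / 2) * ((nr r : ℝ)) ^ (-K) ≤ R z r)
    (hRup : ∀ z ∈ ball (0 : ℂ) 1, ∀ r ∈ Set.Ioo (0 : ℝ) 1, R z r ≤ 1) :
    ∀ δ > (0 : ℝ), ∃ r0 > (0 : ℝ), ∀ r ∈ Set.Ioo (0 : ℝ) r0, r < 1 →
      ∀ z ∈ ball (0 : ℂ) 1,
        |F z r / Real.log (1 / r) - F (Z z r) (R z r) / Real.log (1 / R z r)| ≤ δ :=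
  stmt13_general M ζ α ε K C hM hζ hα hε hK hC hεK F hHolder nr hnr Z R hZmem hZclose hRclose hRup
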